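/- arXiv:1406.2111 — 5 statements merged into one kernel-verified Lean document; each statement's English description precedes it below -/
import Mathlib

section
/- Let n ≥ 3 and 1 ≤ ℓ ≤ n−2 be integers. In the game in which two players alternately claim previously unclaimed edges of the complete graph K_n (one edge per move, with no further restrictions), starting from the empty graph on n vertices, either player (whether moving first or second) has a strategy ensuring that, immediately after some move of his, the graph G consisting of all claimed edges contains a path P such that: (a) the length of P is either ℓ or ℓ+1; (b) every vertex of G not on P has degree 0 in G; and (c) at least one of the two endpoints of P has degree exactly 1 in G. -/
/-!
The protagonist keeps the claimed graph in the following shape after each of his moves: a path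
through all non-isolated vertices (chords allowed) whose first vertex is a leaf. Whatever edge
`xy` the opponent then claims, he restores this shape with a path longer by one or two edges.
If `xy` is a chord, or prolongs the path at an end, the graph still has such a covering path, and
he attaches a fresh vertex to its start, which becomes the new leaf. If `xy` joins an inner
vertex `x` to an isolated `y`, he claims the edge from the other end `v` to `y`, so that `xy`
becomes a chord of the path `u … v y` and the old leaf `u` survives. If both `x` and `y` are
isolated, he claims `vx` and obtains the path `u … v x y`. As the length grows by at most two per
round, it cannot skip both `ℓ` and `ℓ + 1`; a fresh vertex exists because `ℓ + 2 ≤ n`.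
-/

open SimpleGraph

/-- The graph obtained from `G` by adding the edge `e`. -/
def addEdge {V : Type*} (G : SimpleGraph V) (e : Sym2 V) : SimpleGraph V :=
  G ⊔ SimpleGraph.fromEdgeSet {e}

/-- `CanBuild Q turn G`: in the unrestricted game on `Kₙ` where the two players
alternately claim previously unclaimed edges (the protagonist moving iff `turn = true`,
each move being any non-loop pair not yet claimed), starting from the position `G` of
already-claimed edges, the protagonist has a strategy ensuring that at some point,
immediately after one of his own moves, the graph of claimed edges satisfies `Q`. -/
inductive CanBuild {V : Type*} (Q : SimpleGraph V → Prop) : Bool → SimpleGraph V → Prop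
  | achieve (G : SimpleGraph V) (e : Sym2 V) (hd : ¬ e.IsDiag) (hfree : e ∉ G.edgeSet)
      (hQ : Q (addEdge G e)) : CanBuild Q true G
  | step (G : SimpleGraph V) (e : Sym2 V) (hd : ¬ e.IsDiag) (hfree : e ∉ G.edgeSet)
      (h : CanBuild Q false (addEdge G e)) : CanBuild Q true G
  | respond (G : SimpleGraph V) (e₀ : Sym2 V) (hd₀ : ¬ e₀.IsDiag) (hfree₀ : e₀ ∉ G.edgeSet)
      (h : ∀ e : Sym2 V, ¬ e.IsDiag → e ∉ G.edgeSet →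
        CanBuild Q true (addEdge G e)) : CanBuild Q false G

section AddEdge

variable {V : Type*} {G : SimpleGraph V} {a b w z : V}

lemma addEdge_adj {x y : V} :
    (addEdge G s(a, b)).Adj x y ↔ G.Adj x y ∨ s(x, y) = s(a, b) ∧ x ≠ y := by
  simp [addEdge]

lemma le_addEdge (G : SimpleGraph V) (e : Sym2 V) : G ≤ addEdge G e := le_sup_left

lemma addEdge_comm (G : SimpleGraph V) (e f : Sym2 V) :
    addEdge (addEdge G e) f = addEdge (addEdge G f) e :=
  sup_right_comm _ _ _

lemma addEdge_adj_right (h : a ≠ b) : (addEdge G s(a, b)).Adj b a := by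
  simp [addEdge_adj, h.symm, Sym2.eq_swap]

lemma neighborSet_addEdge_of_ne (ha : w ≠ a) (hb : w ≠ b) :
    (addEdge G s(a, b)).neighborSet w = G.neighborSet w := by
  ext c
  simp [addEdge_adj, ha, hb]

lemma neighborSet_addEdge_of_notMem_support (hz : z ∉ G.support) (h : a ≠ z) :
    (addEdge G s(a, z)).neighborSet z = {a} := by
  rw [notMem_support_iff_isIsolated] at hz
  ext c
  simp only [mem_neighborSet, addEdge_adj, hz c, false_or, Set.mem_singleton_iff, Sym2.eq_iff]
  grind

lemma support_addEdge_subset {s : Set V} (hG : G.support ⊆ s) (ha : a ∈ s) (hb : b ∈ s) :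
    (addEdge G s(a, b)).support ⊆ s := by
  intro c hc
  obtain ⟨d, hd⟩ := (mem_support _).1 hc
  rcases addEdge_adj.1 hd with hd | ⟨hd, -⟩
  · exact hG ((mem_support _).2 ⟨d, hd⟩)
  · rcases Sym2.eq_iff.1 hd with ⟨rfl, -⟩ | ⟨rfl, -⟩ <;> assumption

lemma notMem_edgeSet_addEdge_of_notMem_support {e : Sym2 V} (hz : z ∉ G.support)
    (he : s(a, z) ≠ e) : s(a, z) ∉ (addEdge G e).edgeSet := by
  rw [notMem_support_iff_isIsolated] at hz
  simpa [addEdge, he] using fun h : G.Adj a z => hz a h.symm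

end AddEdge

section Game

variable {V : Type*}

def CanAdvance (I : ℕ → SimpleGraph V → Prop) (k : ℕ) (G : SimpleGraph V) : Prop :=
  ∃ (f : Sym2 V) (k' : ℕ), ¬ f.IsDiag ∧ f ∉ G.edgeSet ∧ k < k' ∧ k' ≤ k + 2 ∧ I k' (addEdge G f)

theorem canBuild_true_of_canAdvance {Q : SimpleGraph V → Prop} {I : ℕ → SimpleGraph V → Prop}
    {ℓ : ℕ} (hQ : ∀ k G, I k G → ℓ ≤ k → k ≤ ℓ + 1 → Q G)
    (hfree : ∀ k G, I k G → k < ℓ → ∃ e : Sym2 V, ¬ e.IsDiag ∧ e ∉ G.edgeSet)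
    (hadv : ∀ k G, I k G → k < ℓ → ∀ e : Sym2 V, ¬ e.IsDiag → CanAdvance I k (addEdge G e))
    {k : ℕ} {G : SimpleGraph V} (h : CanAdvance I k G) (hk : k < ℓ) : CanBuild Q true G := by
  induction hm : ℓ - k using Nat.strong_induction_on generalizing k G with
  | _ m ih =>
    obtain ⟨f, k', hf, hf_free, hkk', hk', hI⟩ := h
    by_cases hwin : ℓ ≤ k'
    · exact .achieve G f hf hf_free (hQ k' _ hI hwin (by omega))
    · obtain ⟨e₀, he₀, he₀_free⟩ := hfree k' _ hI (by omega)
      refine .step G f hf hf_free (.respond _ e₀ he₀ he₀_free fun e he _ => ?_)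
      exact ih (ℓ - k') (by omega) (hadv k' _ hI (by omega) e he) (by omega) rfl

end Game

namespace SimpleGraph.Walk

variable {V : Type*} {G : SimpleGraph V} {a b w y : V}

structure IsCoveringPath (p : G.Walk a b) : Prop where
  isPath : p.IsPath
  support_subset : G.support ⊆ {w | w ∈ p.support}

lemma exists_notMem_support [Fintype V] (p : G.Walk a b) (h : p.length + 1 < Fintype.card V) :
    ∃ z, z ∉ p.support := by
  classical
  have hcard : p.support.toFinset.card < Fintype.card V :=
    (List.toFinset_card_le _).trans_lt (by simpa using h)
  simpa [Finset.eq_univ_iff_forall] using (Finset.card_lt_iff_ne_univ _).1 hcard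

lemma isCoveringPath_nil_bot (a : V) : (nil : (⊥ : SimpleGraph V).Walk a a).IsCoveringPath :=
  ⟨IsPath.nil, by simp⟩

namespace IsCoveringPath

variable {p : G.Walk a b}

lemma notMem_support (hp : p.IsCoveringPath) (hw : w ∉ p.support) : w ∉ G.support :=
  fun h => hw (hp.support_subset h)

lemma ne_of_mem_support (hp : p.IsCoveringPath) (ha : a ∈ G.support) : a ≠ b := by
  rintro rfl
  obtain ⟨c, hc⟩ := (mem_support _).1 ha
  have hc_mem : c ∈ p.support := hp.support_subset ((mem_support _).2 ⟨a, hc.symm⟩)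
  rw [nil_iff_support_eq.1 (isPath_iff_nil.1 hp.isPath), List.mem_singleton] at hc_mem
  exact hc.ne hc_mem.symm

lemma reverse (hp : p.IsCoveringPath) : p.reverse.IsCoveringPath :=
  ⟨hp.isPath.reverse, by simpa using hp.support_subset⟩

lemma mapLe_addEdge (hp : p.IsCoveringPath) {x y : V} (hx : x ∈ p.support)
    (hy : y ∈ p.support) : (p.mapLe (le_addEdge G s(x, y))).IsCoveringPath :=
  ⟨hp.isPath.mapLe _, by
    simpa [support_mapLe_eq_support] using support_addEdge_subset hp.support_subset hx hy⟩

lemma exists_cons_addEdge (hp : p.IsCoveringPath) (hy : y ∉ p.support) :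
    ∃ q : (addEdge G s(a, y)).Walk y b,
      q.IsCoveringPath ∧ q.length = p.length + 1 ∧ q.support = y :: p.support := by
  have hay : a ≠ y := fun h => hy (h ▸ p.start_mem_support)
  refine ⟨cons (addEdge_adj_right hay) (p.mapLe (le_addEdge G _)), ⟨?_, ?_⟩, by simp, by simp⟩
  · rw [cons_isPath_iff, support_mapLe_eq_support]
    exact ⟨hp.isPath.mapLe _, hy⟩
  · have := support_addEdge_subset (hp.support_subset.trans (Set.subset_insert y _))
      (Set.mem_insert_of_mem _ p.start_mem_support) (Set.mem_insert y _)
    simp only [support_cons, support_mapLe_eq_support, List.mem_cons]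
    exact this

lemma exists_free_edge [Fintype V] (hp : p.IsCoveringPath)
    (h : p.length + 1 < Fintype.card V) : ∃ e : Sym2 V, ¬ e.IsDiag ∧ e ∉ G.edgeSet := by
  obtain ⟨z, hz⟩ := p.exists_notMem_support h
  refine ⟨s(a, z), fun hd => hz (Sym2.mk_isDiag_iff.1 hd ▸ p.start_mem_support), fun he => ?_⟩
  exact hp.notMem_support hz ((mem_support _).2 ⟨a, (G.mem_edgeSet.1 he).symm⟩)

end IsCoveringPath

end SimpleGraph.Walk

section Strategy

open Walk

variable {V : Type*} {G : SimpleGraph V} {k : ℕ}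

def HasLeafCoveringPath (k : ℕ) (G : SimpleGraph V) : Prop :=
  ∃ (u v : V) (p : G.Walk u v), p.IsCoveringPath ∧ p.length = k ∧ (G.neighborSet u).ncard = 1

def HasTargetPath (ℓ : ℕ) (G : SimpleGraph V) : Prop :=
  ∃ (u v : V) (p : G.Walk u v), p.IsPath ∧ (p.length = ℓ ∨ p.length = ℓ + 1) ∧
    (∀ w : V, w ∉ p.support → (G.neighborSet w).ncard = 0) ∧
    ((G.neighborSet u).ncard = 1 ∨ (G.neighborSet v).ncard = 1)

lemma HasLeafCoveringPath.hasTargetPath {ℓ : ℕ} (h : HasLeafCoveringPath k G)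
    (hk : k = ℓ ∨ k = ℓ + 1) : HasTargetPath ℓ G := by
  obtain ⟨u, v, p, hp, rfl, hu⟩ := h
  refine ⟨u, v, p, hp.isPath, hk, fun w hw => ?_, Or.inl hu⟩
  simp [((notMem_support_iff_isIsolated _).1 (hp.notMem_support hw)).neighborSet_eq_empty]

lemma hasLeafCoveringPath_of_leaf_end {a b : V} {p : G.Walk a b} (hp : p.IsCoveringPath)
    (hb : (G.neighborSet b).ncard = 1) : HasLeafCoveringPath p.length G :=
  ⟨b, a, p.reverse, hp.reverse, p.length_reverse, hb⟩

lemma hasLeafCoveringPath_cons_addEdge {a b y : V} {p : G.Walk a b} (hp : p.IsCoveringPath)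
    (hy : y ∉ p.support) : HasLeafCoveringPath (p.length + 1) (addEdge G s(a, y)) := by
  obtain ⟨q, hq, hlen, -⟩ := hp.exists_cons_addEdge hy
  refine ⟨y, b, q, hq, hlen, ?_⟩
  rw [neighborSet_addEdge_of_notMem_support (hp.notMem_support hy)
    (fun h => hy (h ▸ p.start_mem_support)), Set.ncard_singleton]

variable {u v x y : V} {p : G.Walk u v}

lemma canAdvance_addEdge_of_notMem_of_notMem (hp : p.IsCoveringPath) (hxy : x ≠ y)
    (hx : x ∉ p.support) (hy : y ∉ p.support) :
    CanAdvance HasLeafCoveringPath p.length (addEdge G s(x, y)) := by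
  have hxv : x ≠ v := fun h => hx (h ▸ p.end_mem_support)
  have hyv : y ≠ v := fun h => hy (h ▸ p.end_mem_support)
  obtain ⟨q, hq, hlen, hsupp⟩ := hp.reverse.exists_cons_addEdge (y := x) (by simpa using hx)
  refine ⟨s(v, x), p.length + 2, by simpa using hxv.symm,
    notMem_edgeSet_addEdge_of_notMem_support (hp.notMem_support hx) (by simp [hxv.symm, hyv.symm]),
    by omega, by omega, ?_⟩
  -- claiming `vx` then `xy` instead yields the path `y x v … u` with the fresh leaf `y`
  rw [addEdge_comm]
  have hyq : y ∉ q.support := by simp [hsupp, hxy.symm, hy]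
  simpa [hlen] using hasLeafCoveringPath_cons_addEdge hq hyq

variable [Fintype V]

lemma HasLeafCoveringPath.exists_free_edge (h : HasLeafCoveringPath k G)
    (hcard : k + 1 < Fintype.card V) : ∃ e : Sym2 V, ¬ e.IsDiag ∧ e ∉ G.edgeSet := by
  obtain ⟨u, v, p, hp, rfl, -⟩ := h
  exact hp.exists_free_edge hcard

lemma canAdvance_of_isCoveringPath {a b : V} {q : G.Walk a b} (hq : q.IsCoveringPath)
    (hk : k ≤ q.length) (hk' : q.length ≤ k + 1) (hcard : k + 3 ≤ Fintype.card V) :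
    CanAdvance HasLeafCoveringPath k G := by
  obtain ⟨z, hz⟩ := q.exists_notMem_support (by omega)
  have haz : a ≠ z := fun h => hz (h ▸ q.start_mem_support)
  refine ⟨s(a, z), q.length + 1, by simpa using haz, fun he => ?_, by omega, by omega,
    hasLeafCoveringPath_cons_addEdge hq hz⟩
  exact hq.notMem_support hz ((mem_support _).2 ⟨a, (G.mem_edgeSet.1 he).symm⟩)

lemma canAdvance_addEdge_of_mem_of_notMem (hp : p.IsCoveringPath)
    (hu : (G.neighborSet u).ncard = 1) (hcard : p.length + 3 ≤ Fintype.card V)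
    (hx : x ∈ p.support) (hy : y ∉ p.support) :
    CanAdvance HasLeafCoveringPath p.length (addEdge G s(x, y)) := by
  by_cases hxu : x = u
  · subst hxu
    obtain ⟨q, hq, hlen, -⟩ := hp.exists_cons_addEdge hy
    exact canAdvance_of_isCoveringPath hq (by omega) (by omega) hcard
  by_cases hxv : x = v
  · subst hxv
    obtain ⟨q, hq, hlen, -⟩ := hp.reverse.exists_cons_addEdge (y := y) (by simpa using hy)
    exact canAdvance_of_isCoveringPath hq (by simp [hlen]) (by simp [hlen]) hcard
  have huv : u ≠ v := by
    obtain ⟨c, hc⟩ := Set.nonempty_of_ncard_ne_zero (s := G.neighborSet u) (by omega)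
    exact hp.ne_of_mem_support ((mem_support _).2 ⟨c, hc⟩)
  have hyu : y ≠ u := fun h => hy (h ▸ p.start_mem_support)
  have hyv : y ≠ v := fun h => hy (h ▸ p.end_mem_support)
  obtain ⟨q, hq, hlen, hsupp⟩ := hp.reverse.exists_cons_addEdge (y := y) (by simpa using hy)
  refine ⟨s(v, y), p.length + 1, by simpa using hyv.symm,
    notMem_edgeSet_addEdge_of_notMem_support (hp.notMem_support hy)
      (by simp [Ne.symm hxv, hyv.symm]),
    by omega, by omega, ?_⟩
  -- after claiming `vy` first, `xy` is a chord of the path `y v … u`, whose end `u` is a leaf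
  rw [addEdge_comm]
  have hq' := hq.mapLe_addEdge (x := x) (y := y) (by simp [hsupp, hx]) (by simp [hsupp])
  have hleaf := hasLeafCoveringPath_of_leaf_end hq' (by
    rwa [neighborSet_addEdge_of_ne (Ne.symm hxu) hyu.symm, neighborSet_addEdge_of_ne huv hyu.symm])
  simpa [hlen] using hleaf

lemma HasLeafCoveringPath.canAdvance_addEdge (h : HasLeafCoveringPath k G)
    (hcard : k + 3 ≤ Fintype.card V) {e : Sym2 V} (he : ¬ e.IsDiag) :
    CanAdvance HasLeafCoveringPath k (addEdge G e) := by
  obtain ⟨u, v, p, hp, rfl, hu⟩ := h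
  induction e using Sym2.ind with | _ x y => ?_
  have hxy : x ≠ y := by simpa using he
  by_cases hx : x ∈ p.support <;> by_cases hy : y ∈ p.support
  · exact canAdvance_of_isCoveringPath (hp.mapLe_addEdge hx hy) (by simp) (by simp) hcard
  · exact canAdvance_addEdge_of_mem_of_notMem hp hu hcard hx hy
  · rw [Sym2.eq_swap]
    exact canAdvance_addEdge_of_mem_of_notMem hp hu hcard hy hx
  · exact canAdvance_addEdge_of_notMem_of_notMem hp hxy hx hy

end Strategy

theorem canBuild_hasTargetPath {V : Type*} [Fintype V] {ℓ : ℕ} (hℓ : 1 ≤ ℓ)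
    (hcard : ℓ + 2 ≤ Fintype.card V) (turn : Bool) :
    CanBuild (HasTargetPath ℓ) turn (⊥ : SimpleGraph V) := by
  have hwin {G : SimpleGraph V} (h : CanAdvance HasLeafCoveringPath 0 G) :
      CanBuild (HasTargetPath ℓ) true G :=
    canBuild_true_of_canAdvance (fun _ _ hG _ _ => hG.hasTargetPath (by omega))
      (fun _ _ hG _ => hG.exists_free_edge (by omega))
      (fun _ _ hG _ _ he => hG.canAdvance_addEdge (by omega) he) h hℓ
  obtain ⟨o⟩ : Nonempty V := Fintype.card_pos_iff.1 (by omega)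
  cases turn
  · obtain ⟨e₀, he₀, he₀_free⟩ := (Walk.isCoveringPath_nil_bot o).exists_free_edge
      (by rw [Walk.length_nil]; omega)
    refine .respond ⊥ e₀ he₀ he₀_free fun e he _ => hwin ?_
    induction e using Sym2.ind with | _ x y => ?_
    obtain ⟨q, hq, hlen, -⟩ := (Walk.isCoveringPath_nil_bot x).exists_cons_addEdge (y := y)
      (by simpa [eq_comm] using he)
    exact canAdvance_of_isCoveringPath hq (by omega) (by simp [hlen]) (by omega)
  · exact hwin (canAdvance_of_isCoveringPath (Walk.isCoveringPath_nil_bot o) le_rfl (by simp)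
      (by omega))

theorem statement_7_general (n ℓ : ℕ) (hl1 : 1 ≤ ℓ) (hl2 : ℓ ≤ n - 2) :
    ∀ turn : Bool,
      CanBuild
        (fun G : SimpleGraph (Fin n) =>
          ∃ (u v : Fin n) (p : G.Walk u v), p.IsPath ∧
            (p.length = ℓ ∨ p.length = ℓ + 1) ∧
            (∀ w : Fin n, w ∉ p.support → (G.neighborSet w).ncard = 0) ∧
            ((G.neighborSet u).ncard = 1 ∨ (G.neighborSet v).ncard = 1))
        turn ⊥ :=
  canBuild_hasTargetPath hl1 (by rw [Fintype.card_fin]; omega)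

/-- In the game on `Kₙ` (`n ≥ 3`) in which the players alternately claim free edges with
no further restriction, either player (moving first or second) can ensure that,
immediately after one of his moves, the claimed graph `G` contains a path `P` such that:
(a) `P` has length `ℓ` or `ℓ + 1`; (b) every vertex off `P` is isolated in `G`; and
(c) at least one endpoint of `P` has degree exactly `1` in `G`, where `1 ≤ ℓ ≤ n - 2`. -/
theorem statement_7 (n ℓ : ℕ) (hn : 3 ≤ n) (hl1 : 1 ≤ ℓ) (hl2 : ℓ ≤ n - 2) :
    ∀ turn : Bool,
      CanBuild
        (fun G : SimpleGraph (Fin n) =>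
          ∃ (u v : Fin n) (p : G.Walk u v), p.IsPath ∧
            (p.length = ℓ ∨ p.length = ℓ + 1) ∧
            (∀ w : Fin n, w ∉ p.support → (G.neighborSet w).ncard = 0) ∧
            ((G.neighborSet u).ncard = 1 ∨ (G.neighborSet v).ncard = 1))
        turn ⊥ :=
  statement_7_general n ℓ hl1 hl2
end

section
/- Let n ≥ 2 and 1 ≤ k ≤ n−1 be integers. The maximum number of edges of a graph on n vertices that is saturated with respect to k-vertex-connectivity (i.e., the graph is not k-vertex-connected, but adding any non-edge produces a k-vertex-connected graph) is exactly C(n−1,2) + k − 1. -/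
/-! If `G` is not `k`-connected, some set `S` of fewer than `k` vertices splits the other
`n - |S|` vertices into nonempty parts `A`, `B` with no edge between them, so `G` misses at least
`|A| |B| ≥ |A| + |B| - 1 ≥ n - k` of the `C(n, 2)` pairs. Equality holds for the complete graph
on `n - 1` vertices plus a vertex `v` joined to exactly `k - 1` of them: deleting these neighbours
isolates `v`, while after adding any missing edge `v` has `k` neighbours, one of which survives
the deletion of fewer than `k` vertices and is adjacent to every other remaining vertex. -/

open SimpleGraph

/-- `G` is saturated with respect to the (monotone increasing) property `P`:
`G` does not satisfy `P`, but adding any non-edge of `G` produces a graph satisfying `P`. -/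
def saturatedWrt {V : Type*} (P : SimpleGraph V → Prop) (G : SimpleGraph V) : Prop :=
  ¬ P G ∧ ∀ e : Sym2 V, ¬ e.IsDiag → e ∉ G.edgeSet → P (addEdge G e)

/-- `G` is `k`-vertex-connected: it has more than `k` vertices and removing any set of
fewer than `k` vertices leaves a connected graph. -/
def kConnectedProp {V : Type*} [Fintype V] (k : ℕ) (G : SimpleGraph V) : Prop :=
  k < Fintype.card V ∧ ∀ S : Set V, S.ncard < k → (G.induce Sᶜ).Connected

theorem Nat.choose_two_eq_pred_choose_two_add_pred (m : ℕ) :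
    m.choose 2 = (m - 1).choose 2 + (m - 1) := by
  cases m with
  | zero => rfl
  | succ m => simp [Nat.choose_succ_succ', add_comm]

namespace SimpleGraph

variable {V : Type*}

theorem exists_cut_of_not_connected_induce {G : SimpleGraph V} {s : Set V} (hs : s.Nonempty)
    (h : ¬ (G.induce s).Connected) :
    ∃ A B : Set V, Disjoint A B ∧ A ∪ B = s ∧ A.Nonempty ∧ B.Nonempty ∧
      ∀ a ∈ A, ∀ b ∈ B, ¬ G.Adj a b := by
  have : Nonempty s := hs.to_subtype
  obtain ⟨a, b, hab⟩ : ∃ a b, ¬ (G.induce s).Reachable a b := by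
    simpa [Preconnected] using fun hp => h ⟨hp⟩
  set R : Set s := {x | (G.induce s).Reachable a x}
  refine ⟨(↑) '' R, (↑) '' Rᶜ, ?_, ?_, ⟨a, a, Reachable.rfl, rfl⟩, ⟨b, b, hab, rfl⟩, ?_⟩
  · exact (Set.disjoint_image_iff Subtype.val_injective).mpr disjoint_compl_right
  · rw [← Set.image_union, Set.union_compl_self, Set.image_univ, Subtype.range_coe]
  · rintro _ ⟨x, hx, rfl⟩ _ ⟨y, hy, rfl⟩ hxy
    exact hy (hx.trans (Adj.reachable (by simpa using hxy)))

def cliqueWithVertex (v : V) (N : Set V) : SimpleGraph V where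
  Adj x y := x ≠ y ∧ (x = v → y ∈ N) ∧ (y = v → x ∈ N)
  symm := ⟨fun _ _ h => ⟨h.1.symm, h.2.2, h.2.1⟩⟩
  loopless := ⟨fun _ h => h.1 rfl⟩

@[simp]
theorem cliqueWithVertex_adj {v : V} {N : Set V} {x y : V} :
    (cliqueWithVertex v N).Adj x y ↔ x ≠ y ∧ (x = v → y ∈ N) ∧ (y = v → x ∈ N) :=
  Iff.rfl

theorem addEdge_cliqueWithVertex {v y : V} {N : Set V} (hy : y ≠ v) :
    addEdge (cliqueWithVertex v N) s(v, y) = cliqueWithVertex v (insert y N) := by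
  ext a b
  simp only [addEdge, sup_adj, cliqueWithVertex_adj, fromEdgeSet_adj, Set.mem_singleton_iff,
    Sym2.eq_iff, Set.mem_insert_iff]
  grind

theorem exists_eq_of_notMem_edgeSet_cliqueWithVertex {v : V} {N : Set V} {e : Sym2 V}
    (he : ¬ e.IsDiag) (hne : e ∉ (cliqueWithVertex v N).edgeSet) :
    ∃ y, y ≠ v ∧ y ∉ N ∧ e = s(v, y) := by
  induction e using Sym2.ind with
  | _ x y =>
    simp only [Sym2.mk_isDiag_iff, mem_edgeSet, cliqueWithVertex_adj] at he hne
    grind [Sym2.eq_swap]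

theorem compl_edgeSet_cliqueWithVertex (v : V) (N : Set V) :
    (⊤ : SimpleGraph V).edgeSet \ (cliqueWithVertex v N).edgeSet =
      (fun y => s(v, y)) '' (insert v N)ᶜ := by
  ext e
  induction e using Sym2.ind with
  | _ x y =>
    simp only [Set.mem_sdiff, mem_edgeSet, top_adj, cliqueWithVertex_adj, Set.mem_image,
      Set.mem_compl_iff, Set.mem_insert_iff, Sym2.eq_iff]
    grind

variable [Fintype V]

theorem ncard_edgeSet_top : (⊤ : SimpleGraph V).edgeSet.ncard = (Fintype.card V).choose 2 := by
  classical
  rw [← coe_edgeFinset, Set.ncard_coe_finset, card_edgeFinset_top_eq_card_choose_two]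

theorem ncard_edgeSet_le_choose_two (G : SimpleGraph V) :
    G.edgeSet.ncard ≤ (Fintype.card V).choose 2 :=
  ncard_edgeSet_top (V := V) ▸ Set.ncard_le_ncard (edgeSet_mono le_top)

theorem ncard_edgeSet_add_mul_le_choose_two (G : SimpleGraph V) {A B : Set V}
    (hAB : Disjoint A B) (hG : ∀ a ∈ A, ∀ b ∈ B, ¬ G.Adj a b) :
    G.edgeSet.ncard + A.ncard * B.ncard ≤ (Fintype.card V).choose 2 := by
  have hinj : Set.InjOn (Function.uncurry Sym2.mk) (A ×ˢ B) := by
    rintro ⟨a, b⟩ ⟨ha, hb⟩ ⟨a', b'⟩ ⟨ha', hb'⟩ h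
    rcases Sym2.eq_iff.mp (h : s(a, b) = s(a', b')) with ⟨rfl, rfl⟩ | ⟨rfl, -⟩
    · rfl
    · exact absurd hb' (Set.disjoint_left.mp hAB ha)
  have hdisj : Disjoint G.edgeSet (Function.uncurry Sym2.mk '' A ×ˢ B) := by
    rw [Set.disjoint_right]
    rintro _ ⟨⟨a, b⟩, ⟨ha, hb⟩, rfl⟩
    exact hG a ha b hb
  have hsub : G.edgeSet ∪ Function.uncurry Sym2.mk '' A ×ˢ B ⊆ (⊤ : SimpleGraph V).edgeSet := by
    rintro _ (he | ⟨⟨a, b⟩, ⟨ha, hb⟩, rfl⟩)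
    · exact edgeSet_mono le_top he
    · exact (top_adj a b).mpr (hAB.ne_of_mem ha hb)
  calc G.edgeSet.ncard + A.ncard * B.ncard
      = (G.edgeSet ∪ Function.uncurry Sym2.mk '' A ×ˢ B).ncard := by
        rw [Set.ncard_union_eq hdisj, hinj.ncard_image, Set.ncard_prod]
    _ ≤ (⊤ : SimpleGraph V).edgeSet.ncard := Set.ncard_le_ncard hsub
    _ = (Fintype.card V).choose 2 := ncard_edgeSet_top

theorem ncard_edgeSet_add_card_le_of_not_kConnected {k : ℕ} {G : SimpleGraph V}
    (hG : ¬ kConnectedProp k G) :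
    G.edgeSet.ncard + Fintype.card V ≤ (Fintype.card V).choose 2 + k := by
  by_cases hk : k < Fintype.card V
  · obtain ⟨S, hS, hdisc⟩ : ∃ S : Set V, S.ncard < k ∧ ¬ (G.induce Sᶜ).Connected := by
      simpa [kConnectedProp, hk] using hG
    have hsplit : S.ncard + Sᶜ.ncard = Fintype.card V := by
      rw [Set.ncard_add_ncard_compl, Nat.card_eq_fintype_card]
    obtain ⟨A, B, hAB, hunion, hA, hB, hcut⟩ :=
      exists_cut_of_not_connected_induce (Set.nonempty_of_ncard_ne_zero (by omega)) hdisc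
    have hsize : A.ncard + B.ncard = Sᶜ.ncard := by rw [← hunion, Set.ncard_union_eq hAB]
    have hmul : A.ncard + B.ncard ≤ A.ncard * B.ncard + 1 := by
      have := hA.ncard_pos
      have := hB.ncard_pos
      nlinarith
    have := ncard_edgeSet_add_mul_le_choose_two G hAB hcut
    omega
  · have := ncard_edgeSet_le_choose_two G
    omega

theorem ncard_edgeSet_le_of_not_kConnected {k : ℕ} {G : SimpleGraph V}
    (hG : ¬ kConnectedProp k G) :
    G.edgeSet.ncard ≤ (Fintype.card V - 1).choose 2 + (k - 1) := by
  have := ncard_edgeSet_add_card_le_of_not_kConnected hG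
  have := ncard_edgeSet_le_choose_two G
  have := (Fintype.card V).choose_two_eq_pred_choose_two_add_pred
  omega

theorem ncard_edgeSet_cliqueWithVertex {v : V} {N : Set V} (hv : v ∉ N) :
    (cliqueWithVertex v N).edgeSet.ncard = (Fintype.card V - 1).choose 2 + N.ncard := by
  have hmissing : ((fun y => s(v, y)) '' (insert v N)ᶜ).ncard + (N.ncard + 1) =
      Fintype.card V := by
    rw [Set.InjOn.ncard_image fun _ _ _ _ h => Sym2.congr_right.mp h,
      ← Set.ncard_insert_of_notMem hv, Set.ncard_compl_add_ncard, Nat.card_eq_fintype_card]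
  have hsplit := Set.ncard_sdiff_add_ncard_of_subset
    (edgeSet_mono (le_top : cliqueWithVertex v N ≤ ⊤))
  rw [compl_edgeSet_cliqueWithVertex, ncard_edgeSet_top] at hsplit
  have := (Fintype.card V).choose_two_eq_pred_choose_two_add_pred
  omega

theorem not_kConnected_cliqueWithVertex {k : ℕ} {v : V} {N : Set V} (hv : v ∉ N)
    (hN : N.ncard < k) : ¬ kConnectedProp k (cliqueWithVertex v N) := by
  rintro ⟨hk, hconn⟩
  obtain ⟨w, hw⟩ : (insert v N)ᶜ.Nonempty := by
    rw [Set.nonempty_compl]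
    intro h
    have := Set.ncard_insert_le v N
    rw [h, Set.ncard_univ, Nat.card_eq_fintype_card] at this
    omega
  have hwN : w ∉ N := fun h => hw (Set.mem_insert_of_mem v h)
  have hwv : w ≠ v := fun h => hw (h ▸ Set.mem_insert w N)
  have : Nontrivial ↥Nᶜ := ⟨⟨v, hv⟩, ⟨w, hwN⟩, fun h => hwv (congrArg Subtype.val h).symm⟩
  exact (hconn N hN).preconnected.not_isIsolated ⟨v, hv⟩
    fun x hx => x.2 ((cliqueWithVertex_adj.mp (comap_adj.mp hx)).2.1 rfl)

theorem kConnected_cliqueWithVertex {k : ℕ} {v : V} {N : Set V} (hv : v ∉ N)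
    (hk : k < Fintype.card V) (hN : k ≤ N.ncard) : kConnectedProp k (cliqueWithVertex v N) := by
  refine ⟨hk, fun S hS => ?_⟩
  obtain ⟨z, hzN, hzS⟩ : ∃ z ∈ N, z ∉ S := by
    by_contra! h
    have := Set.ncard_le_ncard h
    omega
  have hzv : z ≠ v := fun h => hv (h ▸ hzN)
  rw [connected_iff_exists_forall_reachable]
  refine ⟨⟨z, hzS⟩, fun w => ?_⟩
  by_cases hwz : w = ⟨z, hzS⟩
  · rw [hwz]
  · refine Adj.reachable ?_
    simp only [comap_adj, Function.Embedding.subtype_apply, cliqueWithVertex_adj]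
    exact ⟨fun h => hwz (Subtype.ext h.symm), fun h => absurd h hzv, fun _ => hzN⟩

theorem saturatedWrt_kConnected_cliqueWithVertex {k : ℕ} {v : V} {N : Set V} (hv : v ∉ N)
    (hk : k < Fintype.card V) (hN : N.ncard + 1 = k) :
    saturatedWrt (kConnectedProp k) (cliqueWithVertex v N) := by
  refine ⟨not_kConnected_cliqueWithVertex hv (by omega), fun e he hne => ?_⟩
  obtain ⟨y, hyv, hyN, rfl⟩ := exists_eq_of_notMem_edgeSet_cliqueWithVertex he hne
  rw [addEdge_cliqueWithVertex hyv]
  refine kConnected_cliqueWithVertex ?_ hk ?_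
  · rintro (h | h)
    exacts [hyv h.symm, hv h]
  · rw [Set.ncard_insert_of_notMem hyN]
    omega

theorem exists_saturatedWrt_kConnected {k : ℕ} (hk1 : 1 ≤ k) (hk : k < Fintype.card V) :
    ∃ G : SimpleGraph V, saturatedWrt (kConnectedProp k) G ∧
      G.edgeSet.ncard = (Fintype.card V - 1).choose 2 + (k - 1) := by
  obtain ⟨v⟩ : Nonempty V := Fintype.card_pos_iff.mp (by omega)
  obtain ⟨N, hNv, hN⟩ : ∃ N ⊆ ({v} : Set V)ᶜ, N.ncard = k - 1 := by
    refine Set.exists_subset_card_eq ?_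
    rw [Set.ncard_compl, Set.ncard_singleton, Nat.card_eq_fintype_card]
    omega
  have hv : v ∉ N := fun h => hNv h rfl
  exact ⟨cliqueWithVertex v N, saturatedWrt_kConnected_cliqueWithVertex hv hk (by omega),
    by rw [ncard_edgeSet_cliqueWithVertex hv, hN]⟩

end SimpleGraph

theorem statement_8_general (n k : ℕ) (hk1 : 1 ≤ k) (hk2 : k ≤ n - 1) :
    IsGreatest
      {m : ℕ | ∃ G : SimpleGraph (Fin n),
        saturatedWrt (kConnectedProp k) G ∧ G.edgeSet.ncard = m}
      ((n - 1).choose 2 + (k - 1)) := by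
  have hcard : Fintype.card (Fin n) = n := Fintype.card_fin n
  refine ⟨?_, ?_⟩
  · simpa [hcard] using exists_saturatedWrt_kConnected (V := Fin n) hk1 (by omega)
  · rintro m ⟨G, hG, rfl⟩
    simpa [hcard] using ncard_edgeSet_le_of_not_kConnected hG.1

/-- For `2 ≤ n` and `1 ≤ k ≤ n - 1`, the maximum number of edges of a graph on `n`
vertices saturated with respect to `k`-vertex-connectivity is exactly `C(n-1,2) + k - 1`. -/
theorem statement_8 (n k : ℕ) (hn : 2 ≤ n) (hk1 : 1 ≤ k) (hk2 : k ≤ n - 1) :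
    IsGreatest
      {m : ℕ | ∃ G : SimpleGraph (Fin n),
        saturatedWrt (kConnectedProp k) G ∧ G.edgeSet.ncard = m}
      ((n - 1).choose 2 + (k - 1)) :=
  statement_8_general n k hk1 hk2
end

section
/- Let k ≥ 1 be an integer and let n ≥ k. The minimum number of edges of a graph on n vertices that is saturated with respect to the property χ_{>k} of having chromatic number at least k+1 (i.e., χ(G) ≤ k but χ(G+e) ≥ k+1 for every non-edge e) is exactly (k−1)(n−1) − C(k−1,2); that is, sat(n, χ_{>k}) = (k−1)(n−1) − C(k−1,2). -/
open SimpleGraph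

/-- The property of having chromatic number at least `k + 1`. -/
def chiGt {V : Type*} (k : ℕ) (G : SimpleGraph V) : Prop :=
  ((k : ℕ∞) + 1) ≤ G.chromaticNumber

/-!
Fix a proper `k`-colouring `C` of a `χ_{>k}`-saturated graph `G`. Joining two non-adjacent
vertices of different colours would keep `C` proper, so `G` is the complete multipartite graph
whose parts are the colour classes; and all `k` classes are nonempty, since otherwise recolouring
an endpoint of a non-edge with a missing colour would colour `G + uv`. Conversely, a complete
`k`-partite graph with nonempty parts is saturated: an edge added inside a part, together with
one vertex from every other part, spans a `(k+1)`-clique.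

For parts of sizes `aᵢ ≥ 1` summing to `n` the graph has `(n² - ∑ aᵢ²) / 2` edges, and `∑ aᵢ²`
is largest when all parts but one are singletons, giving `(k-1)(n-1) - C(k-1,2)` edges.
-/

open Finset Function

variable {V α : Type*}

lemma sum_add_one_sq_add_one_le {ι : Type*} (s : Finset ι) (b : ι → ℕ) :
    ∑ i ∈ s, (b i + 1) ^ 2 + 1 ≤ (∑ i ∈ s, b i + 1) ^ 2 + #s := by
  classical
  induction s using Finset.induction_on with
  | empty => simp
  | insert j s hj ih =>
    rw [sum_insert hj, sum_insert hj, card_insert_of_notMem hj]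
    nlinarith [Nat.zero_le (b j * ∑ i ∈ s, b i)]

lemma two_mul_sub_choose_add_sq {k n : ℕ} (hk : 1 ≤ k) (hn : k ≤ n) :
    2 * ((k - 1) * (n - 1) - (k - 1).choose 2) + (n - k + 1) ^ 2 + k = n ^ 2 + 1 := by
  obtain ⟨j, rfl⟩ := Nat.exists_eq_add_of_le' hk
  obtain ⟨t, rfl⟩ := Nat.exists_eq_add_of_le hn
  have hj : 2 * j.choose 2 + j = j * j := by
    rw [Nat.choose_two_right, Nat.mul_div_cancel' (Nat.even_mul_pred_self j).two_dvd]
    cases j <;> simp; ring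
  have hle : j.choose 2 ≤ j * (j + t) := by nlinarith
  simp only [Nat.add_sub_cancel, show j + 1 + t - 1 = j + t by omega,
    show j + 1 + t - (j + 1) = t by omega]
  zify [hle] at hj ⊢
  linear_combination -hj

section Fibers

variable [Fintype V] [DecidableEq α] {c : V → α}

lemma sum_card_fiber [Fintype α] (c : V → α) : ∑ i, #{v | c v = i} = Fintype.card V := by
  rw [← card_univ, card_eq_sum_card_fiberwise fun _ _ ↦ mem_univ (c _)]

lemma card_fiber_pos (hc : Surjective c) (i : α) : 0 < #{v | c v = i} := by
  obtain ⟨v, rfl⟩ := hc i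
  exact card_pos.2 ⟨v, by simp⟩

lemma sum_card_fiber_sq_add_one_le [Fintype α] (hc : Surjective c) :
    ∑ i, #{v | c v = i} ^ 2 + 1 ≤
      (Fintype.card V - Fintype.card α + 1) ^ 2 + Fintype.card α := by
  have hpos : ∀ i, #{v | c v = i} = (#{v | c v = i} - 1) + 1 := fun i ↦
    (Nat.sub_add_cancel (card_fiber_pos hc i)).symm
  have hsum : ∑ i, (#{v | c v = i} - 1) = Fintype.card V - Fintype.card α := by
    rw [← sum_card_fiber c, sum_congr rfl fun i _ ↦ hpos i, sum_add_distrib]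
    simp
  rw [← hsum, sum_congr rfl fun i _ ↦ congrArg (· ^ 2) (hpos i)]
  exact sum_add_one_sq_add_one_le univ _

lemma sum_card_fiber_sq_add_one_eq [Fintype α] (hc : Surjective c) (i₀ : α)
    (h : ∀ i ≠ i₀, #{v | c v = i} = 1) :
    ∑ i, #{v | c v = i} ^ 2 + 1 =
      (Fintype.card V - Fintype.card α + 1) ^ 2 + Fintype.card α := by
  have hsplit : ∀ f : ℕ → ℕ,
      ∑ i, f #{v | c v = i} = f #{v | c v = i₀} + (Fintype.card α - 1) * f 1 := by
    intro f
    rw [← add_sum_erase _ _ (mem_univ i₀),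
      sum_congr rfl fun i hi ↦ by rw [h i (ne_of_mem_erase hi)]]
    simp [card_erase_of_mem]
  have hα : 0 < Fintype.card α := Fintype.card_pos_iff.2 ⟨i₀⟩
  have hpos := card_fiber_pos hc i₀
  have hsum := hsplit id
  have hsum_sq := hsplit (· ^ 2)
  simp only [id, one_pow, mul_one, sum_card_fiber] at hsum hsum_sq
  rw [hsum_sq]
  rw [show Fintype.card V - Fintype.card α + 1 = #{v | c v = i₀} by omega]
  omega

end Fibers

namespace SimpleGraph

variable {G : SimpleGraph V} {k : ℕ}

lemma chiGt_iff_not_colorable : chiGt k G ↔ ¬ G.Colorable k := by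
  rw [chiGt, ENat.add_one_le_iff (ENat.natCast_ne_top k), ← not_le,
    chromaticNumber_le_iff_colorable]

lemma saturatedWrt_chiGt_iff :
    saturatedWrt (chiGt k) G ↔
      G.Colorable k ∧ ∀ u v, u ≠ v → ¬ G.Adj u v → ¬ (G ⊔ edge u v).Colorable k := by
  simp only [saturatedWrt, chiGt_iff_not_colorable, not_not]
  refine and_congr_right fun _ ↦ ⟨fun h u v huv hnadj ↦ h s(u, v) (by simpa) hnadj, ?_⟩
  rintro h ⟨u, v⟩ huv hnadj
  exact h u v (by simpa using huv) hnadj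

lemma Coloring.colorable_sup_edge (C : G.Coloring (Fin k)) {u v : V} (h : C u ≠ C v) :
    (G ⊔ edge u v).Colorable k := by
  refine ⟨Coloring.mk C ?_⟩
  rintro a b (hab | hab)
  · exact C.valid hab
  · rw [edge_adj] at hab
    obtain ⟨⟨rfl, rfl⟩ | ⟨rfl, rfl⟩, -⟩ := hab
    exacts [h, h.symm]

def Coloring.recolor [DecidableEq V] (C : G.Coloring α) (u : V) {i : α}
    (hi : i ∉ Set.range C) : G.Coloring α :=
  Coloring.mk (update C u i) fun {a b} hab ↦ by
    have hi' : ∀ w, C w ≠ i := fun w h ↦ hi ⟨w, h⟩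
    have := C.valid hab
    have := G.ne_of_adj hab
    simp only [update_apply]
    split_ifs <;> grind

theorem exists_surjective_eq_comap_top_of_saturatedWrt [Finite V] (hV : k ≤ Nat.card V)
    (hG : saturatedWrt (chiGt k) G) :
    ∃ c : V → Fin k, Surjective c ∧ G = (⊤ : SimpleGraph (Fin k)).comap c := by
  classical
  obtain ⟨⟨C⟩, hmax⟩ := saturatedWrt_chiGt_iff.1 hG
  have hsame : ∀ u v, u ≠ v → ¬ G.Adj u v → C u = C v := fun u v huv hnadj ↦
    by_contra fun h ↦ hmax u v huv hnadj (C.colorable_sup_edge h)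
  have hGC : G = (⊤ : SimpleGraph (Fin k)).comap C := by
    ext u v
    exact ⟨C.valid, fun h ↦ by_contra fun hnadj ↦ h (hsame u v (fun e ↦ h (congrArg C e)) hnadj)⟩
  refine ⟨C, ?_, hGC⟩
  by_cases hcomplete : ∀ u v, u ≠ v → G.Adj u v
  · have hinj : Injective C := fun u v h ↦ by_contra fun huv ↦ C.valid (hcomplete u v huv) h
    exact (hinj.bijective_of_nat_card_le (by simpa using hV)).surjective
  · push Not at hcomplete
    obtain ⟨u, v, huv, hnadj⟩ := hcomplete
    intro i
    by_contra hi
    refine hmax u v huv hnadj ((C.recolor u hi).colorable_sup_edge ?_)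
    change update C u i u ≠ update C u i v
    simpa [huv.symm] using fun h ↦ hi ⟨v, h.symm⟩

theorem saturatedWrt_chiGt_comap_top {c : V → Fin k} (hc : Surjective c) :
    saturatedWrt (chiGt k) ((⊤ : SimpleGraph (Fin k)).comap c) := by
  classical
  refine saturatedWrt_chiGt_iff.2 ⟨⟨Coloring.mk c id⟩, fun u v huv hnadj hcol ↦ ?_⟩
  have hcuv : c u = c v := by simpa using hnadj
  -- `u` and one vertex of each colour, with `v` chosen for `c u`, form a `(k+1)`-clique
  set s : Fin k → V := update (surjInv hc) (c u) v
  have hs : ∀ i, c (s i) = i := by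
    intro i
    rcases eq_or_ne i (c u) with rfl | hi
    · simp [s, hcuv]
    · simp [s, hi, surjInv_eq hc]
  have hu : u ∉ univ.image s := by
    simp only [mem_image, mem_univ, true_and, not_exists]
    intro i hi
    have hci : c u = i := hi ▸ hs i
    apply huv
    rw [← hi, ← hci]
    simp [s]
  have hclique : ((⊤ : SimpleGraph (Fin k)).comap c ⊔ edge u v).IsClique
      (insert u (univ.image s) : Finset V) := by
    rw [coe_insert, coe_image, coe_univ, Set.image_univ, isClique_insert]
    constructor
    · rintro _ ⟨i, rfl⟩ _ ⟨j, rfl⟩ hij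
      exact .inl (by simpa [hs] using fun h : i = j ↦ hij (h ▸ rfl))
    · rintro _ ⟨j, rfl⟩ -
      by_cases hj : j = c u
      · subst hj
        exact .inr (by simp [s, edge_adj, huv])
      · exact .inl (by simpa [hs] using Ne.symm hj)
  have hcard := hclique.card_le_of_colorable hcol
  rw [card_insert_of_notMem hu, card_image_of_injective _ (LeftInverse.injective hs),
    card_univ, Fintype.card_fin] at hcard
  omega

lemma two_mul_ncard_edgeSet_comap_top_add_sum_sq [Fintype V] [Fintype α] [DecidableEq α]
    (c : V → α) :
    2 * ((⊤ : SimpleGraph α).comap c).edgeSet.ncard + ∑ i, #{v | c v = i} ^ 2 =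
      Fintype.card V ^ 2 := by
  have hdeg : ∀ v, ((⊤ : SimpleGraph α).comap c).degree v + #{u | c u = c v} =
      Fintype.card V := by
    intro v
    rw [← card_neighborFinset_eq_degree, neighborFinset_eq_filter, ← card_univ,
      ← card_filter_add_card_filter_not (s := univ) (fun u ↦ c u = c v), add_comm]
    simp [eq_comm]
  have hfib : ∑ v, #{u | c u = c v} = ∑ i, #{v | c v = i} ^ 2 := by
    rw [← sum_fiberwise_of_maps_to (g := c) (t := univ) fun _ _ ↦ mem_univ _]
    refine sum_congr rfl fun i _ ↦ ?_
    rw [sum_congr rfl fun v hv ↦ by rw [(mem_filter.1 hv).2], sum_const, smul_eq_mul, sq]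
  rw [← coe_edgeFinset, Set.ncard_coe_finset, ← sum_degrees_eq_twice_card_edges, ← hfib,
    ← sum_add_distrib, sum_congr rfl fun v _ ↦ hdeg v]
  simp [sq]

lemma le_ncard_edgeSet_comap_top [Fintype V] {c : V → Fin k} (hc : Surjective c) :
    (k - 1) * (Fintype.card V - 1) - (k - 1).choose 2 ≤
      ((⊤ : SimpleGraph (Fin k)).comap c).edgeSet.ncard := by
  rcases Nat.eq_zero_or_pos k with rfl | hk
  · simp
  have hV : k ≤ Fintype.card V := by simpa using Fintype.card_le_of_surjective c hc
  have h₁ := two_mul_ncard_edgeSet_comap_top_add_sum_sq c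
  have h₂ := sum_card_fiber_sq_add_one_le hc
  have h₃ := two_mul_sub_choose_add_sq hk hV
  rw [Fintype.card_fin] at h₂
  omega

lemma ncard_edgeSet_comap_top_eq [Fintype V] {c : V → Fin k} (hc : Surjective c)
    (i₀ : Fin k) (h : ∀ i ≠ i₀, #{v | c v = i} = 1) :
    ((⊤ : SimpleGraph (Fin k)).comap c).edgeSet.ncard =
      (k - 1) * (Fintype.card V - 1) - (k - 1).choose 2 := by
  have hV : k ≤ Fintype.card V := by simpa using Fintype.card_le_of_surjective c hc
  have h₁ := two_mul_ncard_edgeSet_comap_top_add_sum_sq c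
  have h₂ := sum_card_fiber_sq_add_one_eq hc i₀ h
  have h₃ := two_mul_sub_choose_add_sq i₀.pos hV
  rw [Fintype.card_fin] at h₂
  omega

end SimpleGraph

lemma Fin.exists_surjective_card_fiber_eq_one {k n : ℕ} (hk : 1 ≤ k) (hn : k ≤ n) :
    ∃ c : Fin n → Fin k, Surjective c ∧ ∃ i₀, ∀ i ≠ i₀, #{v | c v = i} = 1 := by
  refine ⟨fun v ↦ ⟨min v (k - 1), by omega⟩, fun i ↦ ⟨⟨i, by omega⟩, by ext; simp; omega⟩,
    ⟨k - 1, by omega⟩, fun i hi ↦ card_eq_one.2 ⟨⟨i, by omega⟩, ?_⟩⟩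
  have : (i : ℕ) ≠ k - 1 := fun h ↦ hi (Fin.ext h)
  ext v
  simp [Fin.ext_iff]
  omega

/-- For `k ≥ 1` and `n ≥ k`, the minimum number of edges of a graph on `n` vertices
saturated with respect to the property of having chromatic number at least `k + 1` is
exactly `(k-1)(n-1) - C(k-1,2)`. -/
theorem statement_10 (k n : ℕ) (hk : 1 ≤ k) (hn : k ≤ n) :
    IsLeast
      {m : ℕ | ∃ G : SimpleGraph (Fin n),
        saturatedWrt (chiGt k) G ∧ G.edgeSet.ncard = m}
      ((k - 1) * (n - 1) - (k - 1).choose 2) := by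
  constructor
  · obtain ⟨c, hc, i₀, hfib⟩ := Fin.exists_surjective_card_fiber_eq_one hk hn
    exact ⟨_, saturatedWrt_chiGt_comap_top hc,
      by simpa using ncard_edgeSet_comap_top_eq hc i₀ hfib⟩
  · rintro _ ⟨G, hG, rfl⟩
    obtain ⟨c, hc, rfl⟩ := exists_surjective_eq_comap_top_of_saturatedWrt (by simpa using hn) hG
    simpa using le_ncard_edgeSet_comap_top hc
end

section
/- Let G be a 3-colorable graph with a fixed vertex v0 and associated partition V(G) = T_G ∪ M_G ∪ B_G, and let x ≠ v0 be a vertex of G. Then: (a) if Γ_G(x) is not 2-colorable, then x ∈ T_G; and (b) if B_G is an independent set in G (property (P1)) and Γ_G(x) is 2-colorable, then x ∉ T_G. -/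
open SimpleGraph

/-- Top vertices: the vertices receiving the same color as `v0` in every proper
3-coloring of `G`. -/
def topSet {V : Type*} (G : SimpleGraph V) (v0 : V) : Set V :=
  {x | ∀ c : G.Coloring (Fin 3), c x = c v0}

/-- Middle vertices: the vertices outside the top having a neighbor in the top. -/
def midSet {V : Type*} (G : SimpleGraph V) (v0 : V) : Set V :=
  {x | x ∉ topSet G v0 ∧ ∃ t ∈ topSet G v0, G.Adj x t}

/-- Bottom vertices: all remaining vertices. -/
def botSet' {V : Type*} (G : SimpleGraph V) (v0 : V) : Set V :=
  {x | x ∉ topSet G v0 ∧ x ∉ midSet G v0}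

/-- The vertex set of `Γ_G(u)`, the connected component of `u` in the subgraph of `G`
induced on `{u} ∪ M_G`: all vertices reachable from `u` by a walk staying inside
`{u} ∪ M_G`. -/
def gammaSet {V : Type*} (G : SimpleGraph V) (v0 u : V) : Set V :=
  {w | ∃ p : G.Walk u w, ∀ z ∈ p.support, z ∈ insert u (midSet G v0)}

/-- `m` and `m'` lie in the same middle-component of `G` (a connected component of the
subgraph induced on `M_G`): they are joined by a walk staying inside `M_G`. -/
def midReach {V : Type*} (G : SimpleGraph V) (v0 : V) (m m' : V) : Prop :=
  ∃ p : G.Walk m m', ∀ z ∈ p.support, z ∈ midSet G v0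

/-- Property (P1): the bottom `B_G` is an independent set in `G`. -/
def prop1 {V : Type*} (G : SimpleGraph V) (v0 : V) : Prop :=
  ∀ u ∈ botSet' G v0, ∀ v ∈ botSet' G v0, ¬ G.Adj u v

/-- Property (P2): every middle-component of `G` has at most one attached bottom
vertex. -/
def prop2 {V : Type*} (G : SimpleGraph V) (v0 : V) : Prop :=
  ∀ u v m m' : V, u ∈ botSet' G v0 → v ∈ botSet' G v0 →
    m ∈ midSet G v0 → m' ∈ midSet G v0 →
    G.Adj u m → G.Adj v m' → midReach G v0 m m' → u = v

/-- `G` is good: it satisfies properties (P1) and (P2). -/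
def goodGraph {V : Type*} (G : SimpleGraph V) (v0 : V) : Prop :=
  prop1 G v0 ∧ prop2 G v0

/-- The bad pairs `BAD_G`: the pairs `uv` such that there exist distinct bottom vertices
`x ≠ y` with `u ∈ V(Γ_G(x))` and `v ∈ V(Γ_G(y))`. -/
def badPair {V : Type*} (G : SimpleGraph V) (v0 : V) (e : Sym2 V) : Prop :=
  ∃ u v x y : V, e = s(u, v) ∧ x ∈ botSet' G v0 ∧ y ∈ botSet' G v0 ∧ x ≠ y ∧
    u ∈ gammaSet G v0 x ∧ v ∈ gammaSet G v0 y

/-- `G` is almost good: `G` is good, or some edge can be removed from `G` so that the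
resulting graph is good. -/
def almostGood {V : Type*} (G : SimpleGraph V) (v0 : V) : Prop :=
  goodGraph G v0 ∨ ∃ e ∈ G.edgeSet, goodGraph (G.deleteEdges {e}) v0

/-!
Fix a proper 3-coloring `c` and write `a = c v0`. Middle vertices have a neighbor colored
`a`, so they avoid `a`; if moreover `c x ≠ a`, then `c` maps all of `Γ_G(x)` into the two
colors other than `a`, which is (a).

For (b), use (P1) to recolor every bottom vertex with `a`: a bottom vertex has no top
neighbor and no bottom neighbor, so all its neighbors are middle vertices. Now every
vertex outside `M_G` has color `a`. Every neighbor of `Γ_G(x)` outside `Γ_G(x)` lies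
outside `{x} ∪ M_G`, so a 2-coloring of `Γ_G(x)` by the two colors other than `a` can be
pasted in. Since `v0 ∉ Γ_G(x)`, the result colors `x` differently from `v0`.
-/

namespace SimpleGraph

variable {V α : Type*} {G : SimpleGraph V}

def Coloring.induceAvoiding (c : G.Coloring α) {S : Set V} {a : α}
    (h : ∀ v ∈ S, c v ≠ a) : (G.induce S).Coloring {b // b ≠ a} :=
  Coloring.mk (fun v => ⟨c v, h v v.2⟩) fun huv heq => c.valid huv (congrArg Subtype.val heq)

theorem Coloring.exists_recolor_on (c : G.Coloring α) {S : Set V} {a : α}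
    (hS : ∀ u ∈ S, ∀ v ∉ S, G.Adj u v → c v = a) (d : (G.induce S).Coloring {b // b ≠ a}) :
    ∃ c' : G.Coloring α, (∀ v ∉ S, c' v = c v) ∧ ∀ v ∈ S, c' v ≠ a := by
  classical
  let f : V → α := fun v => if h : v ∈ S then d ⟨v, h⟩ else c v
  have hf_in : ∀ v (h : v ∈ S), f v = d ⟨v, h⟩ := fun v h => dif_pos h
  have hf_out : ∀ v ∉ S, f v = c v := fun v h => dif_neg h
  refine ⟨Coloring.mk f fun {u v} huv => ?_, hf_out, fun v hv => hf_in v hv ▸ (d _).2⟩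
  by_cases hu : u ∈ S <;> by_cases hv : v ∈ S
  · rw [hf_in u hu, hf_in v hv]
    exact fun heq => d.valid (show (G.induce S).Adj ⟨u, hu⟩ ⟨v, hv⟩ from huv) (Subtype.ext heq)
  · rw [hf_in u hu, hf_out v hv, hS u hu v hv huv]
    exact (d _).2
  · rw [hf_out u hu, hf_in v hv, hS v hv u hu huv.symm]
    exact fun heq => (d _).2 heq.symm
  · rw [hf_out u hu, hf_out v hv]
    exact c.valid huv

end SimpleGraph

theorem card_subtype_ne_fin_three (a : Fin 3) : Fintype.card {b : Fin 3 // b ≠ a} = 2 := by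
  revert a; decide

section Partition

variable {V : Type*} {G : SimpleGraph V} {v0 : V}

theorem mem_topSet_self : v0 ∈ topSet G v0 := fun _ => rfl

theorem notMem_midSet_of_mem_topSet {v : V} (hv : v ∈ topSet G v0) : v ∉ midSet G v0 :=
  fun h => h.1 hv

theorem SimpleGraph.Coloring.ne_of_mem_midSet (c : G.Coloring (Fin 3)) {m : V}
    (hm : m ∈ midSet G v0) : c m ≠ c v0 := by
  obtain ⟨-, t, ht, hmt⟩ := hm
  exact ht c ▸ c.valid hmt

theorem mem_topSet_of_notMem_midSet_of_notMem_botSet {v : V} (hM : v ∉ midSet G v0)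
    (hB : v ∉ botSet' G v0) : v ∈ topSet G v0 := by
  by_contra hT
  exact hB ⟨hT, hM⟩

theorem mem_midSet_of_adj_botSet {u v : V} (hu : u ∈ botSet' G v0) (huv : G.Adj u v)
    (hv : v ∉ botSet' G v0) : v ∈ midSet G v0 := by
  by_contra hM
  exact hu.2 ⟨hu.1, v, mem_topSet_of_notMem_midSet_of_notMem_botSet hM hv, huv⟩

theorem exists_coloring_eq_of_notMem_midSet (hP1 : prop1 G v0) (c : G.Coloring (Fin 3)) :
    ∃ c' : G.Coloring (Fin 3), ∀ w ∉ midSet G v0, c' w = c' v0 := by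
  classical
  let f : V → Fin 3 := fun w => if w ∈ botSet' G v0 then c v0 else c w
  have hf_bot : ∀ w ∈ botSet' G v0, f w = c v0 := fun w h => if_pos h
  have hf_else : ∀ w ∉ botSet' G v0, f w = c w := fun w h => if_neg h
  have hv0 : f v0 = c v0 := hf_else v0 fun h => h.1 mem_topSet_self
  refine ⟨Coloring.mk f fun {u v} huv => ?_, fun w hw => ?_⟩
  · by_cases hu : u ∈ botSet' G v0 <;> by_cases hv : v ∈ botSet' G v0
    · exact absurd huv (hP1 u hu v hv)
    · rw [hf_bot u hu, hf_else v hv]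
      exact (c.ne_of_mem_midSet (mem_midSet_of_adj_botSet hu huv hv)).symm
    · rw [hf_else u hu, hf_bot v hv]
      exact c.ne_of_mem_midSet (mem_midSet_of_adj_botSet hv huv.symm hu)
    · rw [hf_else u hu, hf_else v hv]
      exact c.valid huv
  · change f w = f v0
    by_cases hB : w ∈ botSet' G v0
    · rw [hf_bot w hB, hv0]
    · rw [hf_else w hB, hv0]
      exact mem_topSet_of_notMem_midSet_of_notMem_botSet hw hB c

end Partition

section Gamma

variable {V : Type*} {G : SimpleGraph V} {v0 x : V}

theorem self_mem_gammaSet : x ∈ gammaSet G v0 x := ⟨Walk.nil, by simp⟩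

theorem gammaSet_subset : gammaSet G v0 x ⊆ insert x (midSet G v0) :=
  fun _ ⟨p, hp⟩ => hp _ p.end_mem_support

theorem mem_gammaSet_of_adj {u v : V} (hu : u ∈ gammaSet G v0 x) (huv : G.Adj u v)
    (hv : v ∈ insert x (midSet G v0)) : v ∈ gammaSet G v0 x := by
  obtain ⟨p, hp⟩ := hu
  refine ⟨p.concat huv, fun z hz => ?_⟩
  rw [Walk.support_concat, List.mem_append, List.mem_singleton] at hz
  rcases hz with hz | rfl
  exacts [hp z hz, hv]

theorem v0_notMem_gammaSet (hx : x ≠ v0) : v0 ∉ gammaSet G v0 x := fun h =>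
  (gammaSet_subset h).elim (fun h => hx h.symm) (notMem_midSet_of_mem_topSet mem_topSet_self)

theorem colorable_two_gammaSet_of_coloring_ne (c : G.Coloring (Fin 3)) (hcx : c x ≠ c v0) :
    (G.induce (gammaSet G v0 x)).Colorable 2 := by
  have hΓ : ∀ w ∈ gammaSet G v0 x, c w ≠ c v0 := fun w hw =>
    (gammaSet_subset hw).elim (fun h => h ▸ hcx) c.ne_of_mem_midSet
  simpa [card_subtype_ne_fin_three] using (c.induceAvoiding hΓ).colorable

theorem exists_coloring_ne_of_colorable_two_gammaSet (hP1 : prop1 G v0) (hx : x ≠ v0)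
    (c : G.Coloring (Fin 3)) (h2 : (G.induce (gammaSet G v0 x)).Colorable 2) :
    ∃ c' : G.Coloring (Fin 3), c' x ≠ c' v0 := by
  obtain ⟨c₁, hc₁⟩ := exists_coloring_eq_of_notMem_midSet hP1 c
  have hout : ∀ u ∈ gammaSet G v0 x, ∀ v ∉ gammaSet G v0 x, G.Adj u v → c₁ v = c₁ v0 :=
    fun u hu v hv huv => hc₁ v fun hM => hv (mem_gammaSet_of_adj hu huv (Or.inr hM))
  obtain ⟨c', hc'_out, hc'_in⟩ := c₁.exists_recolor_on hout
    (h2.toColoring (card_subtype_ne_fin_three _).ge)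
  refine ⟨c', ?_⟩
  rw [hc'_out v0 (v0_notMem_gammaSet hx)]
  exact hc'_in x self_mem_gammaSet

end Gamma

/-- Claim: for a 3-colorable graph `G` with fixed vertex `v0` and a vertex `x ≠ v0`:
(a) if `Γ_G(x)` is not 2-colorable then `x` is a top vertex, and (b) if `B_G` is
independent (property (P1)) and `Γ_G(x)` is 2-colorable then `x` is not a top vertex. -/
theorem statement_13 {V : Type*} (G : SimpleGraph V) (hcol : G.Colorable 3)
    (v0 x : V) (hx : x ≠ v0) :
    (¬ (G.induce (gammaSet G v0 x)).Colorable 2 → x ∈ topSet G v0) ∧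
    (prop1 G v0 → (G.induce (gammaSet G v0 x)).Colorable 2 → x ∉ topSet G v0) := by
  refine ⟨fun h2 c => ?_, fun hP1 h2 hxT => ?_⟩
  · by_contra hcx
    exact h2 (colorable_two_gammaSet_of_coloring_ne c hcx)
  · obtain ⟨c', hc'⟩ :=
      exists_coloring_ne_of_colorable_two_gammaSet hP1 hx (hcol.toColoring (by simp)) h2
    exact hc' (hxT c')
end

section
/- Let k ≥ 2 be an integer and let G0 = (V,E) be a graph. Assume there is a partition V = U ∪ W such that ν(G0) = ν(G0[U]) = k−1, and that there exist vertices w1, w2 ∈ W and u ∈ U such that w1 and w2 each have degree exactly 1 in G0 and both edges u w1 and u w2 belong to E. Then, in the saturation game (G0, M_k), where M_k is the property of admitting a matching of size k, Max as the second player has a strategy ensuring that in the graph G at the end of the game every vertex w ∈ W has at least one neighbor in U. -/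
open SimpleGraph

/-- In the saturation game for the monotone property `P`, a move `e` is legal in
position `G` if `e` is a non-loop non-edge of `G` whose addition keeps `P` unsatisfied. -/
def legalMove {V : Type*} (P : SimpleGraph V → Prop) (G : SimpleGraph V) (e : Sym2 V) : Prop :=
  ¬ e.IsDiag ∧ e ∉ G.edgeSet ∧ ¬ P (addEdge G e)

/-- `GameEnsures P Q turn G` : in the saturation game for the property `P`, played from
position `G` where the protagonist is to move iff `turn = true`, the protagonist has a
strategy guaranteeing that the final (`P`-saturated) graph satisfies `Q`. -/
inductive GameEnsures {V : Type*} (P Q : SimpleGraph V → Prop) : Bool → SimpleGraph V → Prop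
  | gameOver (turn : Bool) (G : SimpleGraph V)
      (hend : ∀ e, ¬ legalMove P G e) (hQ : Q G) : GameEnsures P Q turn G
  | protagonistMove (G : SimpleGraph V) (e : Sym2 V) (hl : legalMove P G e)
      (h : GameEnsures P Q false (addEdge G e)) : GameEnsures P Q true G
  | opponentMove (G : SimpleGraph V) (e₀ : Sym2 V) (hl : legalMove P G e₀)
      (h : ∀ e, legalMove P G e → GameEnsures P Q true (addEdge G e)) :
      GameEnsures P Q false G

/-- The property of admitting a matching of size `k`. -/
def hasMatchingOfSize {V : Type*} (k : ℕ) (G : SimpleGraph V) : Prop :=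
  ∃ M : G.Subgraph, M.IsMatching ∧ M.edgeSet.ncard = k

/-- The matching number `ν(G)`: the maximum size of a matching in `G`. -/
noncomputable def matchingNumber {V : Type*} (G : SimpleGraph V) : ℕ :=
  sSup {m : ℕ | ∃ M : G.Subgraph, M.IsMatching ∧ M.edgeSet.ncard = m}

/-
Max can play arbitrarily. Let `H` be the final graph, so `ν(H) = k - 1`, and suppose `w ∈ W` has
no neighbour in `U`. Then `wu` is a non-edge, so `H + wu` has a `k`-matching through `wu`, and
deleting `wu` leaves a maximum matching `M` of `H` missing `u`. A maximum matching `N` of `G0[U]`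
misses `w1, w2`, hence covers `u`. Choosing `M` to share as many edges with `N` as possible, an
exchange argument gives `V(N) \ {u} ⊆ V(M)`; and `M` covers `w1, w2`, since otherwise `u wᵢ`
would augment it. So `2(k - 1) = |V(M)| ≥ 2(k - 1) - 1 + 2`, a contradiction.
-/

section

variable {V : Type*}

/- Matchings are handled as sets of pairwise disjoint edges: unlike `Subgraph.IsMatching`, this
makes adding or removing an edge and enlarging the ambient graph free. -/
def IsEdgeMatching (G : SimpleGraph V) (s : Set (Sym2 V)) : Prop :=
  s ⊆ G.edgeSet ∧ s.PairwiseDisjoint ((↑) : Sym2 V → Set V)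

def edgeVerts (s : Set (Sym2 V)) : Set V := ⋃ e ∈ s, (e : Set V)

@[simp]
lemma mem_edgeVerts {s : Set (Sym2 V)} {v : V} : v ∈ edgeVerts s ↔ ∃ e ∈ s, v ∈ e := by
  simp [edgeVerts]

@[simp]
lemma edgeVerts_insert {s : Set (Sym2 V)} {e : Sym2 V} :
    edgeVerts (insert e s) = (e : Set V) ∪ edgeVerts s :=
  Set.biUnion_insert ..

lemma edgeVerts_mono {s t : Set (Sym2 V)} (h : s ⊆ t) : edgeVerts s ⊆ edgeVerts t :=
  Set.biUnion_subset_biUnion_left h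

namespace IsEdgeMatching

variable {G G' : SimpleGraph V} {s t : Set (Sym2 V)} {e f : Sym2 V} {v x y : V}

lemma mono (hs : IsEdgeMatching G s) (h : G ≤ G') : IsEdgeMatching G' s :=
  ⟨hs.1.trans (edgeSet_mono h), hs.2⟩

lemma subset (hs : IsEdgeMatching G s) (h : t ⊆ s) : IsEdgeMatching G t :=
  ⟨h.trans hs.1, hs.2.subset h⟩

lemma eq_of_mem (hs : IsEdgeMatching G s) (he : e ∈ s) (hf : f ∈ s) (hve : v ∈ e)
    (hvf : v ∈ f) : e = f :=
  hs.2.elim_set he hf v hve hvf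

lemma insert_mk (hs : IsEdgeMatching G s) (hxy : G.Adj x y) (hx : x ∉ edgeVerts s)
    (hy : y ∉ edgeVerts s) : IsEdgeMatching G (insert s(x, y) s) := by
  refine ⟨Set.insert_subset hxy hs.1, hs.2.insert fun e he _ => ?_⟩
  rw [Sym2.coe_mk, Set.disjoint_insert_left, Set.disjoint_singleton_left]
  exact ⟨fun h => hx (mem_edgeVerts.2 ⟨e, he, h⟩),
    fun h => hy (mem_edgeVerts.2 ⟨e, he, h⟩)⟩

lemma exchange {M N : Set (Sym2 V)} {z q : V} (hM : IsEdgeMatching G M)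
    (hN : IsEdgeMatching G N)
    (hyz : s(y, z) ∈ N) (hzq : s(z, q) ∈ M) (hy : y ∉ edgeVerts M) :
    IsEdgeMatching G (insert s(y, z) (M \ {s(z, q)})) := by
  refine (hM.subset Set.sdiff_subset).insert_mk (hN.1 hyz)
    (fun h => hy (edgeVerts_mono Set.sdiff_subset h)) fun hz => ?_
  obtain ⟨e, ⟨heM, hne⟩, hze⟩ := mem_edgeVerts.1 hz
  exact hne (hM.eq_of_mem heM hzq hze (Sym2.mem_mk_left z q))

lemma ncard_edgeVerts [Finite V] (hs : IsEdgeMatching G s) :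
    (edgeVerts s).ncard = 2 * s.ncard := by
  rw [edgeVerts, (Set.toFinite s).ncard_biUnion (fun _ _ => Set.toFinite _) hs.2,
    ← finsum_one, mul_finsum_mem]
  refine finsum_mem_congr rfl fun e he => ?_
  induction e using Sym2.ind with
  | _ a b => rw [Sym2.coe_mk, Set.ncard_pair (G.ne_of_adj (hs.1 he)), mul_one]

end IsEdgeMatching

lemma SimpleGraph.Subgraph.IsMatching.isEdgeMatching {G : SimpleGraph V} {M : G.Subgraph}
    (hM : M.IsMatching) :
    IsEdgeMatching G M.edgeSet := by
  refine ⟨M.edgeSet_subset, fun e he f hf hef => Set.disjoint_left.2 fun v hve hvf => hef ?_⟩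
  obtain ⟨a, rfl⟩ := Sym2.mem_iff_exists.1 hve
  obtain ⟨b, rfl⟩ := Sym2.mem_iff_exists.1 hvf
  obtain rfl : a = b := hM.eq_of_adj_left he hf
  rfl

lemma hasMatchingOfSize_iff {G : SimpleGraph V} {k : ℕ} :
    hasMatchingOfSize k G ↔ ∃ s, IsEdgeMatching G s ∧ s.ncard = k := by
  refine ⟨fun ⟨M, hM, hk⟩ => ⟨M.edgeSet, hM.isEdgeMatching, hk⟩, ?_⟩
  rintro ⟨s, hs, hk⟩
  let M : G.Subgraph :=
    { verts := edgeVerts s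
      Adj := fun a b => s(a, b) ∈ s
      adj_sub := fun h => hs.1 h
      edge_vert := fun h => mem_edgeVerts.2 ⟨_, h, Sym2.mem_mk_left _ _⟩
      symm := ⟨fun a b h => by rwa [Sym2.eq_swap]⟩ }
  have hMs : M.edgeSet = s := by
    ext e
    induction e using Sym2.ind
    rfl
  refine ⟨M, fun v hv => ?_, hMs ▸ hk⟩
  obtain ⟨e, he, hve⟩ := mem_edgeVerts.1 hv
  obtain ⟨a, rfl⟩ := Sym2.mem_iff_exists.1 hve
  exact ⟨a, he, fun b hb => Sym2.congr_right.1 (hs.eq_of_mem hb he (Sym2.mem_mk_left v b)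
    (Sym2.mem_mk_left v a))⟩

lemma IsEdgeMatching.ncard_ne {G : SimpleGraph V} {s : Set (Sym2 V)} {k : ℕ}
    (hG : ¬ hasMatchingOfSize k G) (hs : IsEdgeMatching G s) : s.ncard ≠ k :=
  fun h => hG (hasMatchingOfSize_iff.2 ⟨s, hs, h⟩)

section MatchingNumber

variable [Finite V]

lemma bddAbove_setOf_hasMatchingOfSize (G : SimpleGraph V) :
    BddAbove {m | hasMatchingOfSize m G} :=
  ⟨Nat.card (Sym2 V), by rintro _ ⟨M, -, rfl⟩; exact Set.ncard_le_card _⟩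

lemma hasMatchingOfSize_matchingNumber (G : SimpleGraph V) :
    hasMatchingOfSize (matchingNumber G) G :=
  Nat.sSup_mem (s := {m | hasMatchingOfSize m G}) ⟨0, ⊥, fun _ hv => hv.elim, by simp⟩
    (bddAbove_setOf_hasMatchingOfSize G)

lemma not_hasMatchingOfSize_of_matchingNumber_lt {G : SimpleGraph V} {k : ℕ}
    (h : matchingNumber G < k) : ¬ hasMatchingOfSize k G :=
  fun hk => h.not_ge (le_csSup (bddAbove_setOf_hasMatchingOfSize G) hk)

lemma exists_isEdgeMatching_induce (G : SimpleGraph V) (U : Set V) :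
    ∃ s, IsEdgeMatching G s ∧ s.ncard = matchingNumber (G.induce U) ∧ edgeVerts s ⊆ U := by
  obtain ⟨M, hM, hcard⟩ := hasMatchingOfSize_matchingNumber (G.induce U)
  let f := (Embedding.induce (G := G) U).toHom
  have hf : Function.Injective f := Subtype.val_injective
  refine ⟨(M.map f).edgeSet, (hM.map f hf).isEdgeMatching, ?_, ?_⟩
  · rw [Subgraph.edgeSet_map, Set.ncard_image_of_injective _ (Sym2.map.injective hf), hcard]
  · intro v hv
    obtain ⟨e, he, hve⟩ := mem_edgeVerts.1 hv
    obtain ⟨x, -, rfl⟩ := Subgraph.mem_verts_of_mem_edge he hve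
    exact x.2

end MatchingNumber

lemma mem_edgeSet_of_mem_addEdge {G : SimpleGraph V} {e f : Sym2 V}
    (hf : f ∈ (addEdge G e).edgeSet) (hfe : f ≠ e) : f ∈ G.edgeSet := by
  simpa [addEdge, hfe] using hf

lemma ncard_compl_edgeSet_addEdge_lt [Finite V] {P : SimpleGraph V → Prop} {G : SimpleGraph V}
    {e : Sym2 V} (he : legalMove P G e) :
    (addEdge G e).edgeSetᶜ.ncard < G.edgeSetᶜ.ncard := by
  refine Set.ncard_lt_ncard (compl_lt_compl_iff_lt.2 ?_)
  exact (Set.ssubset_iff_of_subset (edgeSet_mono le_sup_left)).2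
    ⟨e, by simp [he.1], he.2.1⟩

theorem gameEnsures_of_saturated [Finite V] {P Q : SimpleGraph V → Prop} {G₀ : SimpleGraph V}
    (hQ : ∀ G, G₀ ≤ G → ¬ P G → (∀ e, ¬ legalMove P G e) → Q G) (G : SimpleGraph V)
    (hG : G₀ ≤ G) (hP : ¬ P G) (b : Bool) : GameEnsures P Q b G := by
  induction hn : G.edgeSetᶜ.ncard using Nat.strong_induction_on generalizing G b with
  | _ n ih =>
  by_cases hend : ∃ e, legalMove P G e
  · obtain ⟨e₀, he₀⟩ := hend
    have next (e) (he : legalMove P G e) (b : Bool) : GameEnsures P Q b (addEdge G e) :=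
      ih _ (hn ▸ ncard_compl_edgeSet_addEdge_lt he) _ (hG.trans le_sup_left) he.2.2 b rfl
    cases b
    · exact .opponentMove G e₀ he₀ fun e he => next e he true
    · exact .protagonistMove G e₀ he₀ (next e₀ he₀ false)
  · push Not at hend
    exact .gameOver b G hend (hQ G hG hP hend)

lemma exists_isEdgeMatching_not_mem_edgeVerts {H : SimpleGraph V} {m : ℕ} {x y : V}
    (hH : ¬ hasMatchingOfSize (m + 1) H)
    (hHxy : hasMatchingOfSize (m + 1) (addEdge H s(x, y))) :
    ∃ M, IsEdgeMatching H M ∧ M.ncard = m ∧ y ∉ edgeVerts M := by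
  obtain ⟨T, hT, hTm⟩ := hasMatchingOfSize_iff.1 hHxy
  have hTH {e} (he : e ∈ T) (hne : e ≠ s(x, y)) : e ∈ H.edgeSet :=
    mem_edgeSet_of_mem_addEdge (hT.1 he) hne
  have hxyT : s(x, y) ∈ T := by
    by_contra h
    have hTM : IsEdgeMatching H T := ⟨fun e he => hTH he (ne_of_mem_of_not_mem he h), hT.2⟩
    exact hTM.ncard_ne hH hTm
  refine ⟨T \ {s(x, y)}, ⟨fun e he => hTH he.1 he.2, hT.2.subset Set.sdiff_subset⟩, ?_, ?_⟩
  · rw [Set.ncard_sdiff_singleton_of_mem hxyT, hTm, Nat.add_sub_cancel]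
  · rintro hy
    obtain ⟨e, ⟨heT, hne⟩, hye⟩ := mem_edgeVerts.1 hy
    exact hne (hT.eq_of_mem heT hxyT hye (Sym2.mem_mk_right x y))

section MaximumMatching

variable [Finite V] {H : SimpleGraph V} {m : ℕ} {M N : Set (Sym2 V)} {u w w' x y : V}

lemma IsEdgeMatching.mem_edgeVerts_of_adj (hH : ¬ hasMatchingOfSize (m + 1) H)
    (hM : IsEdgeMatching H M) (hMm : M.ncard = m) (hxy : H.Adj x y) (hx : x ∉ edgeVerts M) :
    y ∈ edgeVerts M := by
  by_contra hy
  have hxyM : s(x, y) ∉ M := fun h => hx (mem_edgeVerts.2 ⟨_, h, Sym2.mem_mk_left x y⟩)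
  exact (hM.insert_mk hxy hx hy).ncard_ne hH (by rw [Set.ncard_insert_of_notMem hxyM, hMm])

lemma exists_isEdgeMatching_edgeVerts_subset (hH : ¬ hasMatchingOfSize (m + 1) H)
    (hN : IsEdgeMatching H N) {M₀ : Set (Sym2 V)} (hM₀ : IsEdgeMatching H M₀)
    (hM₀m : M₀.ncard = m) (hu : u ∉ edgeVerts M₀) :
    ∃ M, IsEdgeMatching H M ∧ M.ncard = m ∧ u ∉ edgeVerts M ∧
      edgeVerts N \ {u} ⊆ edgeVerts M := by
  -- Take `M` sharing as many edges with `N` as possible; an `N`-vertex `y ≠ u` missed by `M`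
  -- would let us trade the `M`-edge `zq` at its `N`-partner `z` for `yz`.
  obtain ⟨M, ⟨hM, hMm, huM⟩, hmax⟩ := Set.exists_max_image
    {M | IsEdgeMatching H M ∧ M.ncard = m ∧ u ∉ edgeVerts M} (fun M => (M ∩ N).ncard)
    (Set.toFinite _) ⟨M₀, hM₀, hM₀m, hu⟩
  refine ⟨M, hM, hMm, huM, fun y ⟨hyN, hyu⟩ => ?_⟩
  by_contra hyM
  obtain ⟨e, hyzN, hye⟩ := mem_edgeVerts.1 hyN
  obtain ⟨z, rfl⟩ := Sym2.mem_iff_exists.1 hye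
  have hzM := hM.mem_edgeVerts_of_adj hH hMm (hN.1 hyzN) hyM
  obtain ⟨f, hzqM, hzf⟩ := mem_edgeVerts.1 hzM
  obtain ⟨q, rfl⟩ := Sym2.mem_iff_exists.1 hzf
  have hyzM : s(y, z) ∉ M := fun h => hyM (mem_edgeVerts.2 ⟨_, h, Sym2.mem_mk_left y z⟩)
  have hzqN : s(z, q) ∉ N := fun h => hyzM <|
    hN.eq_of_mem hyzN h (Sym2.mem_mk_right y z) (Sym2.mem_mk_left z q) ▸ hzqM
  have huM' : u ∉ edgeVerts (insert s(y, z) (M \ {s(z, q)})) := by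
    simp only [edgeVerts_insert, Sym2.coe_mk, Set.mem_union, Set.mem_insert_iff,
      Set.mem_singleton_iff, not_or]
    exact ⟨⟨hyu ∘ Eq.symm, fun h => huM (h ▸ hzM)⟩,
      fun h => huM (edgeVerts_mono Set.sdiff_subset h)⟩
  have hM'N : insert s(y, z) (M \ {s(z, q)}) ∩ N = insert s(y, z) (M ∩ N) := by
    rw [Set.insert_inter_of_mem hyzN, Set.sdiff_inter_right_comm,
      Set.sdiff_singleton_eq_self fun h => hzqN h.2]
  have := hmax _ ⟨hM.exchange hN hyzN hzqM hyM, (Set.ncard_exchange hyzM hzqM).trans hMm, huM'⟩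
  rw [hM'N, Set.ncard_insert_of_notMem (fun h => hyzM h.1)] at this
  omega

theorem IsEdgeMatching.mem_edgeVerts_of_adj_of_adj (hH : ¬ hasMatchingOfSize (m + 1) H)
    (hN : IsEdgeMatching H N) (hNm : N.ncard = m) (hw : w ∉ edgeVerts N)
    (hw' : w' ∉ edgeVerts N) (hww' : w ≠ w') (huw : H.Adj u w) (huw' : H.Adj u w')
    (hM : IsEdgeMatching H M) (hMm : M.ncard = m) : u ∈ edgeVerts M := by
  by_contra hu
  obtain ⟨M', hM', hM'm, huM', hNM'⟩ := exists_isEdgeMatching_edgeVerts_subset hH hN hM hMm hu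
  have huN : u ∈ edgeVerts N := by
    by_contra huN
    exact hw (hN.mem_edgeVerts_of_adj hH hNm huw huN)
  have hsub : insert w (insert w' (edgeVerts N \ {u})) ⊆ edgeVerts M' :=
    Set.insert_subset (hM'.mem_edgeVerts_of_adj hH hM'm huw huM') <|
      Set.insert_subset (hM'.mem_edgeVerts_of_adj hH hM'm huw' huM') hNM'
  have := Set.ncard_le_ncard hsub
  rw [Set.ncard_insert_of_notMem, Set.ncard_insert_of_notMem, Set.ncard_sdiff_singleton_of_mem huN,
    hN.ncard_edgeVerts, hM'.ncard_edgeVerts, hNm, hM'm] at this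
  · omega
  · exact fun h => hw' h.1
  · rintro (h | h)
    exacts [hww' h, hw h.1]

end MaximumMatching

end

theorem statement_19_general {V : Type*} [Fintype V] (k : ℕ) (hk : 2 ≤ k)
    (G0 : SimpleGraph V) (U W : Set V)
    (hdisj : Disjoint U W)
    (hnu : matchingNumber G0 = k - 1)
    (hnuU : matchingNumber (G0.induce U) = k - 1)
    (w1 w2 : V) (hw1 : w1 ∈ W) (hw2 : w2 ∈ W) (hww : w1 ≠ w2) (u : V) (hu : u ∈ U)
    (huw1 : G0.Adj u w1) (huw2 : G0.Adj u w2) :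
    GameEnsures (hasMatchingOfSize k)
      (fun G : SimpleGraph V => ∀ w ∈ W, ∃ x ∈ U, G.Adj w x)
      false G0 := by
  obtain ⟨m, rfl⟩ : ∃ m, k = m + 1 := ⟨k - 1, by omega⟩
  obtain ⟨N, hN, hNm, hNU⟩ := exists_isEdgeMatching_induce G0 U
  have hWN : ∀ x ∈ W, x ∉ edgeVerts N := fun x hx hxN =>
    Set.disjoint_left.1 hdisj (hNU hxN) hx
  refine gameEnsures_of_saturated (fun H hle hH hsat w hw => ?_) G0 le_rfl
    (not_hasMatchingOfSize_of_matchingNumber_lt (by omega)) false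
  by_contra! hwU
  have hwu : w ≠ u := fun h => Set.disjoint_left.1 hdisj hu (h ▸ hw)
  have hHwu : hasMatchingOfSize (m + 1) (addEdge H s(w, u)) := by
    by_contra h
    exact hsat s(w, u) ⟨Sym2.mk_isDiag_iff.not.2 hwu, hwU u hu, h⟩
  obtain ⟨M, hM, hMm, huM⟩ := exists_isEdgeMatching_not_mem_edgeVerts hH hHwu
  exact huM <| (hN.mono hle).mem_edgeVerts_of_adj_of_adj hH (by omega) (hWN w1 hw1) (hWN w2 hw2)
    hww (hle huw1) (hle huw2) hM hMm

/-- Let `k ≥ 2` and let `G0` be a graph whose vertex set is partitioned as `U ∪ W` with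
`ν(G0) = ν(G0[U]) = k - 1`, and suppose there are distinct `w1, w2 ∈ W` of degree
exactly `1` in `G0` and a vertex `u ∈ U` with `u w1, u w2 ∈ E(G0)`. Then in the
saturation game `(G0, M_k)`, Max, moving second, can ensure that in the final graph
every vertex of `W` has a neighbor in `U`. -/
theorem statement_19 {V : Type*} [Fintype V] (k : ℕ) (hk : 2 ≤ k)
    (G0 : SimpleGraph V) (U W : Set V)
    (hUW : U ∪ W = Set.univ) (hdisj : Disjoint U W)
    (hnu : matchingNumber G0 = k - 1)
    (hnuU : matchingNumber (G0.induce U) = k - 1)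
    (w1 w2 : V) (hw1 : w1 ∈ W) (hw2 : w2 ∈ W) (hww : w1 ≠ w2) (u : V) (hu : u ∈ U)
    (hdw1 : (G0.neighborSet w1).ncard = 1) (hdw2 : (G0.neighborSet w2).ncard = 1)
    (huw1 : G0.Adj u w1) (huw2 : G0.Adj u w2) :
    GameEnsures (hasMatchingOfSize k)
      (fun G : SimpleGraph V => ∀ w ∈ W, ∃ x ∈ U, G.Adj w x)
      false G0 :=
  statement_19_general k hk G0 U W hdisj hnu hnuU w1 w2 hw1 hw2 hww u hu huw1 huw2
end
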